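/- If U''(s) > 0 for every s ∈ ℝ, then for every x ∈ ℝ^{2d}, the linear span of the vectors {𝒰₀(x), 𝒰₁(x), …, 𝒰_{2d−3}(x), e_{u_d}, [e_{u_d}, 𝒱](x)} equals ℝ^{2d}; in particular every standard basis vector e_{z_i}, e_{u_i} (1 ≤ i ≤ d) lies in this span. -/

import Mathlib

open scoped BigOperators

noncomputable section

abbrev E (d : ℕ) : Type := (Fin d → ℝ) × (Fin d → ℝ)

def ez (d : ℕ) (i : Fin d) : E d := (Pi.single i 1, 0)

def eu (d : ℕ) (i : Fin d) : E d := (0, Pi.single i 1)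

noncomputable def ham (d : ℕ) (V U : ℝ → ℝ) (x : E d) : ℝ :=
  (∑ i : Fin d, ((x.2 i) ^ 2 / 2 + V (x.1 i))) +
    ∑ i : Fin (d - 1),
      U (x.1 ⟨i.1 + 1, by have := i.2; omega⟩ - x.1 ⟨i.1, by have := i.2; omega⟩)

noncomputable def drift (d : ℕ) (γ₁ γd : ℝ) (V U : ℝ → ℝ) (x : E d) : E d :=
  (x.2, fun i =>
    -(fderiv ℝ (ham d V U) x (ez d i)) -
      (if i.1 = 0 then γ₁ * x.2 i else 0) -
      (if i.1 = d - 1 then γd * x.2 i else 0))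

noncomputable def lie (d : ℕ) (X Y : E d → E d) (x : E d) : E d :=
  fderiv ℝ Y x (X x) - fderiv ℝ X x (Y x)

noncomputable def UU (d : ℕ) (b : E d → E d) (v : E d) : ℕ → E d → E d
  | 0 => fun _ => v
  | n + 1 => lie d (UU d b v n) b

/-!
Write the drift as `b(z, u) = (u, -∇W(z) - Γ u)` with `W` the potential energy and `Γ` the
diagonal damping, so that `[Y, b] = Db · Y - DY · b` and `Db(z, u)(a, c) = (c, -∇²W(z) a - Γ c)`.
The Hessian `∇²W` is tridiagonal with subdiagonal entries `-U''(z_{k+1} - z_k) ≠ 0`.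
Order the coordinates as `u₀, z₀, u₁, z₁, …` (indices start at `0`). If all coordinates of `Y`
beyond some position vanish identically, so do those of `DY · b`, while `Db · Y` reaches exactly
one position further, with leading coefficient multiplied by `1` (from `u_k` to `z_k`) or by
`U''` (from `z_k` to `u_{k+1}`). Hence `𝒰₀(x), …, 𝒰_{2d-3}(x)` is a triangular family reaching
`u₀, …, z_{d-2}`, and `e_{u_{d-1}}` and `[e_{u_{d-1}}, b] = e_{z_{d-1}} - γ_d e_{u_{d-1}}` supply
the last two directions.
-/

namespace OscillatorChain

open ContinuousLinearMap

variable {d : ℕ}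

def bondLeft (m : Fin (d - 1)) : Fin d := ⟨m, by omega⟩

def bondRight (m : Fin (d - 1)) : Fin d := ⟨m + 1, by omega⟩

def bond (m : Fin (d - 1)) : (Fin d → ℝ) →L[ℝ] ℝ :=
  proj (R := ℝ) (φ := fun _ => ℝ) (bondRight m) - proj (bondLeft m)

@[simp]
lemma bond_apply (m : Fin (d - 1)) (z : Fin d → ℝ) :
    bond m z = z (bondRight m) - z (bondLeft m) :=
  rfl

section potential

variable (V U : ℝ → ℝ)

def potential (z : Fin d → ℝ) : ℝ := ∑ i, V (z i) + ∑ m, U (bond m z)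

def gradPotential (z : Fin d → ℝ) : (Fin d → ℝ) →L[ℝ] ℝ :=
  ∑ i, deriv V (z i) • proj i + ∑ m, deriv U (bond m z) • bond m

def hessPotential (z v : Fin d → ℝ) : (Fin d → ℝ) →L[ℝ] ℝ :=
  ∑ i, v i • deriv (deriv V) (z i) • proj i +
    ∑ m, bond m v • deriv (deriv U) (bond m z) • bond m

lemma gradPotential_apply (z v : Fin d → ℝ) :
    gradPotential V U z v = ∑ i, deriv V (z i) * v i + ∑ m, deriv U (bond m z) * bond m v := by
  simp [gradPotential, sum_apply]

lemma hessPotential_apply (z v a : Fin d → ℝ) :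
    hessPotential V U z v a = ∑ i, v i * (deriv (deriv V) (z i) * a i) +
      ∑ m, bond m v * (deriv (deriv U) (bond m z) * bond m a) := by
  simp [hessPotential, sum_apply]

variable {V U}

lemma hasFDerivAt_potential (hV : Differentiable ℝ V) (hU : Differentiable ℝ U)
    (z : Fin d → ℝ) : HasFDerivAt (potential V U) (gradPotential V U z) z :=
  (HasFDerivAt.fun_sum fun i _ =>
      (hV _).hasDerivAt.comp_hasFDerivAt z (proj i : (Fin d → ℝ) →L[ℝ] ℝ).hasFDerivAt).add
    (HasFDerivAt.fun_sum fun m _ => (hU _).hasDerivAt.comp_hasFDerivAt z (bond m).hasFDerivAt)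

lemma hasFDerivAt_gradPotential_apply (hV : Differentiable ℝ (deriv V))
    (hU : Differentiable ℝ (deriv U)) (z v : Fin d → ℝ) :
    HasFDerivAt (fun z => gradPotential V U z v) (hessPotential V U z v) z := by
  simp only [gradPotential_apply]
  exact (HasFDerivAt.fun_sum fun i _ => ((hV _).hasDerivAt.comp_hasFDerivAt z
      (proj i : (Fin d → ℝ) →L[ℝ] ℝ).hasFDerivAt).mul_const (v i)).add
    (HasFDerivAt.fun_sum fun m _ =>
      ((hU _).hasDerivAt.comp_hasFDerivAt z (bond m).hasFDerivAt).mul_const (bond m v))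

lemma hessPotential_single_succ (z a : Fin d → ℝ) {k : ℕ} (hk : k + 1 < d)
    (ha : ∀ j : Fin d, k < j.1 → a j = 0) :
    hessPotential V U z (Pi.single ⟨k + 1, hk⟩ 1) a =
      -(deriv (deriv U) (z ⟨k + 1, hk⟩ - z ⟨k, by omega⟩) * a ⟨k, by omega⟩) := by
  rw [hessPotential_apply, Finset.sum_eq_zero, zero_add,
    Finset.sum_eq_single (⟨k, by omega⟩ : Fin (d - 1))]
  · simp [bondLeft, bondRight, ha ⟨k + 1, hk⟩ (by simp), Fin.ext_iff]
  · intro m _ hm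
    have hm : m.1 ≠ k := fun h => hm (Fin.ext h)
    rcases lt_or_gt_of_ne hm with hlt | hgt
    · simp [bondLeft, bondRight, Fin.ext_iff, hm, show m.1 ≠ k + 1 by omega]
    · simp [bondLeft, bondRight, ha ⟨m + 1, _⟩ (by simp; omega), ha ⟨m, _⟩ hgt]
  · simp
  · intro i _
    by_cases hi : i = ⟨k + 1, hk⟩
    · simp [hi, ha ⟨k + 1, hk⟩ (by simp)]
    · simp [Pi.single_eq_of_ne hi]

end potential

def damping (γ₁ γd : ℝ) (i : Fin d) : ℝ :=
  (if i.1 = 0 then γ₁ else 0) + (if i.1 = d - 1 then γd else 0)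

section drift

variable {V U : ℝ → ℝ} {γ₁ γd : ℝ}

lemma ham_eq : ham d V U = fun x => ∑ i, x.2 i ^ 2 / 2 + potential V U x.1 := by
  funext x
  simp only [ham, potential, Finset.sum_add_distrib, add_assoc]
  rfl

lemma fderiv_ham_ez (hV : Differentiable ℝ V) (hU : Differentiable ℝ U) (x : E d) (i : Fin d) :
    fderiv ℝ (ham d V U) x (ez d i) = gradPotential V U x.1 (Pi.single i 1) := by
  have hkin : Differentiable ℝ fun u : Fin d → ℝ => ∑ i, u i ^ 2 / 2 := by fun_prop
  have h : HasFDerivAt (fun x : E d => ∑ i, x.2 i ^ 2 / 2 + potential V U x.1)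
      ((fderiv ℝ (fun u : Fin d → ℝ => ∑ i, u i ^ 2 / 2) x.2).comp (snd ℝ _ _) +
        (gradPotential V U x.1).comp (fst ℝ _ _)) x :=
    ((hkin x.2).hasFDerivAt.comp x hasFDerivAt_snd).add
      ((hasFDerivAt_potential hV hU x.1).comp x hasFDerivAt_fst)
  rw [ham_eq, h.fderiv]
  simp [ez]

lemma drift_eq (hV : Differentiable ℝ V) (hU : Differentiable ℝ U) :
    drift d γ₁ γd V U = fun x =>
      (x.2, fun i => -gradPotential V U x.1 (Pi.single i 1) - damping γ₁ γd i * x.2 i) := by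
  funext x
  refine Prod.ext rfl (funext fun i => ?_)
  simp only [drift, fderiv_ham_ez hV hU, damping]
  split_ifs <;> ring

lemma fderiv_drift_apply (hV : ContDiff ℝ 2 V) (hU : ContDiff ℝ 2 U) (y w : E d) :
    fderiv ℝ (drift d γ₁ γd V U) y w =
      (w.2, fun i => -hessPotential V U y.1 (Pi.single i 1) w.1 - damping γ₁ γd i * w.2 i) := by
  have h : HasFDerivAt (drift d γ₁ γd V U) ((snd ℝ _ _).prod (pi fun i =>
      -(hessPotential V U y.1 (Pi.single i 1)).comp (fst ℝ (Fin d → ℝ) (Fin d → ℝ)) -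
        damping γ₁ γd i • (proj i).comp (snd ℝ (Fin d → ℝ) (Fin d → ℝ)))) y := by
    rw [drift_eq (hV.differentiable two_ne_zero) (hU.differentiable two_ne_zero)]
    refine hasFDerivAt_snd.prodMk (hasFDerivAt_pi'.2 fun i => ?_)
    exact ((hasFDerivAt_gradPotential_apply ((hV.deriv' (n := 1)).differentiable one_ne_zero)
      ((hU.deriv' (n := 1)).differentiable one_ne_zero) y.1 _).comp y hasFDerivAt_fst).neg.sub
      (((proj i : (Fin d → ℝ) →L[ℝ] ℝ).hasFDerivAt.comp y hasFDerivAt_snd).const_mul _)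
  rw [h.fderiv]
  rfl

end drift

variable (d) in
def supportedBelow (nz nu : ℕ) : Submodule ℝ (E d) where
  carrier := {w | (∀ i : Fin d, nz ≤ i.1 → w.1 i = 0) ∧ ∀ i : Fin d, nu ≤ i.1 → w.2 i = 0}
  add_mem' ha hb := ⟨fun i hi => by simp [ha.1 i hi, hb.1 i hi],
    fun i hi => by simp [ha.2 i hi, hb.2 i hi]⟩
  zero_mem' := ⟨fun _ _ => rfl, fun _ _ => rfl⟩
  smul_mem' c w hw := ⟨fun i hi => by simp [hw.1 i hi], fun i hi => by simp [hw.2 i hi]⟩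

section supportedBelow

variable {nz nu : ℕ}

lemma supportedBelow_mono {nz' nu' : ℕ} (hz : nz ≤ nz') (hu : nu ≤ nu') :
    supportedBelow d nz nu ≤ supportedBelow d nz' nu' :=
  fun _ hw => ⟨fun i hi => hw.1 i (hz.trans hi), fun i hi => hw.2 i (hu.trans hi)⟩

lemma supportedBelow_zero_zero : supportedBelow d 0 0 = ⊥ :=
  eq_bot_iff.2 fun _ hw => Prod.ext (funext fun i => hw.1 i i.1.zero_le)
    (funext fun i => hw.2 i i.1.zero_le)

lemma supportedBelow_eq_top (hz : d ≤ nz) (hu : d ≤ nu) : supportedBelow d nz nu = ⊤ :=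
  eq_top_iff.2 fun _ _ => ⟨fun i hi => absurd i.2 (by omega), fun i hi => absurd i.2 (by omega)⟩

lemma eu_mem_supportedBelow (j : Fin d) (hj : j.1 < nu) : eu d j ∈ supportedBelow d nz nu :=
  ⟨fun _ _ => rfl, fun i hi => Pi.single_eq_of_ne (fun h => by subst h; omega) _⟩

lemma supportedBelow_succ_right_le {v : E d} {k : ℕ} (hk : k < d)
    (hv : v ∈ supportedBelow d nz (k + 1)) (hvk : v.2 ⟨k, hk⟩ ≠ 0) :
    supportedBelow d nz (k + 1) ≤ supportedBelow d nz k ⊔ ℝ ∙ v := by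
  intro w hw
  set c := w.2 ⟨k, hk⟩ / v.2 ⟨k, hk⟩
  refine Submodule.mem_sup.2 ⟨w - c • v, ⟨fun i hi => ?_, fun i hi => ?_⟩, c • v,
    Submodule.smul_mem _ _ (Submodule.mem_span_singleton_self v), sub_add_cancel w _⟩
  · simp [hw.1 i hi, hv.1 i hi]
  · rcases hi.lt_or_eq with hi | hi
    · simp [hw.2 i hi, hv.2 i hi]
    · obtain rfl : i = ⟨k, hk⟩ := Fin.ext hi.symm
      simp [c, hvk]

lemma supportedBelow_succ_left_le {v : E d} {k : ℕ} (hk : k < d)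
    (hv : v ∈ supportedBelow d (k + 1) nu) (hvk : v.1 ⟨k, hk⟩ ≠ 0) :
    supportedBelow d (k + 1) nu ≤ supportedBelow d k nu ⊔ ℝ ∙ v := by
  intro w hw
  set c := w.1 ⟨k, hk⟩ / v.1 ⟨k, hk⟩
  refine Submodule.mem_sup.2 ⟨w - c • v, ⟨fun i hi => ?_, fun i hi => ?_⟩, c • v,
    Submodule.smul_mem _ _ (Submodule.mem_span_singleton_self v), sub_add_cancel w _⟩
  · rcases hi.lt_or_eq with hi | hi
    · simp [hw.1 i hi, hv.1 i hi]
    · obtain rfl : i = ⟨k, hk⟩ := Fin.ext hi.symm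
      simp [c, hvk]
  · simp [hw.2 i hi, hv.2 i hi]

lemma map_fderiv_apply_eq_zero {E F G : Type*} [NormedAddCommGroup E] [NormedSpace ℝ E]
    [NormedAddCommGroup F] [NormedSpace ℝ F] [NormedAddCommGroup G] [NormedSpace ℝ G]
    (ℓ : F →L[ℝ] G) {f : E → F} (hf : ∀ y, ℓ (f y) = 0) (x v : E) :
    ℓ (fderiv ℝ f x v) = 0 := by
  by_cases h : DifferentiableAt ℝ f x
  · have hcomp := (ℓ.hasFDerivAt.comp x h.hasFDerivAt).fderiv
    rw [show ⇑ℓ ∘ f = fun _ => 0 from funext hf, fderiv_fun_const] at hcomp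
    exact (DFunLike.congr_fun hcomp v).symm
  · simp [fderiv_zero_of_not_differentiableAt h]

lemma fderiv_apply_mem_supportedBelow {Y : E d → E d}
    (hY : ∀ y, Y y ∈ supportedBelow d nz nu) (x v : E d) :
    fderiv ℝ Y x v ∈ supportedBelow d nz nu :=
  ⟨fun i hi => map_fderiv_apply_eq_zero ((proj i).comp (fst ℝ _ _)) (f := Y)
      (fun y => (hY y).1 i hi) x v,
    fun i hi => map_fderiv_apply_eq_zero ((proj i).comp (snd ℝ _ _)) (f := Y)
      (fun y => (hY y).2 i hi) x v⟩

end supportedBelow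

section brackets

variable {V U : ℝ → ℝ} {γ₁ γd : ℝ}

lemma fderiv_drift_mem_supportedBelow (hV : ContDiff ℝ 2 V) (hU : ContDiff ℝ 2 U)
    {nz nu : ℕ} (h : nu ≤ nz + 1) {w : E d} (hw : w ∈ supportedBelow d nz nu) (y : E d) :
    fderiv ℝ (drift d γ₁ γd V U) y w ∈ supportedBelow d nu (nz + 1) := by
  rw [fderiv_drift_apply hV hU]
  refine ⟨hw.2, fun i hi => ?_⟩
  obtain ⟨_ | k, hk⟩ := i
  · simp at hi
  simp only at hi ⊢
  rw [hessPotential_single_succ _ _ _ fun j hj => hw.1 j (by omega),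
    hw.1 ⟨k, _⟩ (by simp; omega), hw.2 _ (by simp; omega)]
  simp

lemma lie_drift_mem_supportedBelow (hV : ContDiff ℝ 2 V) (hU : ContDiff ℝ 2 U)
    {nz nu : ℕ} (h₁ : nz ≤ nu) (h₂ : nu ≤ nz + 1)
    {Y : E d → E d} (hY : ∀ y, Y y ∈ supportedBelow d nz nu) (y : E d) :
    lie d Y (drift d γ₁ γd V U) y ∈ supportedBelow d nu (nz + 1) :=
  sub_mem (fderiv_drift_mem_supportedBelow hV hU h₂ (hY y) y)
    (supportedBelow_mono h₁ h₂ (fderiv_apply_mem_supportedBelow hY y _))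

lemma lie_drift_of_snd_ne_zero (hV : ContDiff ℝ 2 V) (hU : ContDiff ℝ 2 U)
    {k : ℕ} (hk : k < d) {Y : E d → E d}
    (hY : ∀ y, Y y ∈ supportedBelow d k (k + 1)) {x : E d} (hYx : (Y x).2 ⟨k, hk⟩ ≠ 0) :
    (∀ y, lie d Y (drift d γ₁ γd V U) y ∈ supportedBelow d (k + 1) (k + 1)) ∧
      (lie d Y (drift d γ₁ γd V U) x).1 ⟨k, hk⟩ ≠ 0 := by
  refine ⟨lie_drift_mem_supportedBelow hV hU k.le_succ le_rfl hY, ?_⟩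
  have hDY := (fderiv_apply_mem_supportedBelow hY x (drift d γ₁ γd V U x)).1 ⟨k, hk⟩ le_rfl
  simpa [lie, fderiv_drift_apply hV hU, hDY] using hYx

lemma lie_drift_of_fst_ne_zero (hV : ContDiff ℝ 2 V) (hU : ContDiff ℝ 2 U)
    (hU'' : ∀ s, deriv (deriv U) s ≠ 0) {k : ℕ} (hk : k + 1 < d)
    {Y : E d → E d} (hY : ∀ y, Y y ∈ supportedBelow d (k + 1) (k + 1)) {x : E d}
    (hYx : (Y x).1 ⟨k, by omega⟩ ≠ 0) :
    (∀ y, lie d Y (drift d γ₁ γd V U) y ∈ supportedBelow d (k + 1) (k + 2)) ∧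
      (lie d Y (drift d γ₁ γd V U) x).2 ⟨k + 1, hk⟩ ≠ 0 := by
  refine ⟨lie_drift_mem_supportedBelow hV hU le_rfl k.succ.le_succ hY, ?_⟩
  have hDY := (fderiv_apply_mem_supportedBelow hY x (drift d γ₁ γd V U x)).2 ⟨k + 1, hk⟩ le_rfl
  have hYk := (hY x).2 ⟨k + 1, hk⟩ le_rfl
  simp only [lie, fderiv_drift_apply hV hU, Prod.snd_sub, Pi.sub_apply, hDY, hYk,
    hessPotential_single_succ _ _ hk fun j hj => (hY x).1 j hj]
  simpa using mul_ne_zero (hU'' _) hYx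

lemma UU_drift_two_mul (hV : ContDiff ℝ 2 V) (hU : ContDiff ℝ 2 U)
    (hU'' : ∀ s, deriv (deriv U) s ≠ 0) (h0 : 0 < d) (x : E d) :
    ∀ k (hk : k < d),
      (∀ y, UU d (drift d γ₁ γd V U) (eu d ⟨0, h0⟩) (2 * k) y ∈ supportedBelow d k (k + 1)) ∧
        (UU d (drift d γ₁ γd V U) (eu d ⟨0, h0⟩) (2 * k) x).2 ⟨k, hk⟩ ≠ 0
  | 0, _ => ⟨fun _ => eu_mem_supportedBelow _ zero_lt_one, by simp [UU, eu]⟩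
  | k + 1, hk => by
    obtain ⟨hY, hYx⟩ := UU_drift_two_mul hV hU hU'' h0 x k (by omega)
    obtain ⟨hY', hY'x⟩ := lie_drift_of_snd_ne_zero hV hU _ hY hYx
    exact lie_drift_of_fst_ne_zero hV hU hU'' hk hY' hY'x

lemma lie_const_eu_drift (hV : ContDiff ℝ 2 V) (hU : ContDiff ℝ 2 U) (j : Fin d) (x : E d) :
    lie d (fun _ => eu d j) (drift d γ₁ γd V U) x = ez d j - damping γ₁ γd j • eu d j := by
  rw [lie, fderiv_drift_apply hV hU, fderiv_fun_const]
  ext i <;> by_cases h : i = j <;> simp [ez, eu, h]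

lemma supportedBelow_le_of_UU_mem (hV : ContDiff ℝ 2 V) (hU : ContDiff ℝ 2 U)
    (hU'' : ∀ s, deriv (deriv U) s ≠ 0) (h0 : 0 < d) {x : E d} {M : Submodule ℝ (E d)}
    (hM : ∀ n < 2 * d - 2, UU d (drift d γ₁ γd V U) (eu d ⟨0, h0⟩) n x ∈ M) :
    ∀ k < d, supportedBelow d k k ≤ M
  | 0, _ => by simp [supportedBelow_zero_zero]
  | k + 1, hk => by
    obtain ⟨hY, hYx⟩ := UU_drift_two_mul hV hU hU'' h0 x k (by omega)
    obtain ⟨hY', hY'x⟩ := lie_drift_of_snd_ne_zero hV hU _ hY hYx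
    calc supportedBelow d (k + 1) (k + 1)
        ≤ supportedBelow d k (k + 1) ⊔ ℝ ∙ UU d _ _ (2 * k + 1) x :=
          supportedBelow_succ_left_le _ (hY' x) hY'x
      _ ≤ supportedBelow d k k ⊔ ℝ ∙ UU d _ _ (2 * k) x ⊔ ℝ ∙ UU d _ _ (2 * k + 1) x :=
          sup_le_sup_right (supportedBelow_succ_right_le _ (hY x) hYx) _
      _ ≤ M := sup_le (sup_le (supportedBelow_le_of_UU_mem hV hU hU'' h0 hM k (by omega))
          ((Submodule.span_singleton_le_iff_mem _ _).2 (hM (2 * k) (by omega))))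
          ((Submodule.span_singleton_le_iff_mem _ _).2 (hM (2 * k + 1) (by omega)))

lemma top_le_of_brackets_mem (hV : ContDiff ℝ 2 V) (hU : ContDiff ℝ 2 U)
    (hU'' : ∀ s, deriv (deriv U) s ≠ 0) (h0 : 0 < d) {x : E d} {M : Submodule ℝ (E d)}
    (hUU : ∀ n < 2 * d - 2, UU d (drift d γ₁ γd V U) (eu d ⟨0, h0⟩) n x ∈ M)
    (heu : eu d ⟨d - 1, by omega⟩ ∈ M)
    (hlie : lie d (fun _ => eu d ⟨d - 1, by omega⟩) (drift d γ₁ γd V U) x ∈ M) :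
    ⊤ ≤ M := by
  have htop : supportedBelow d (d - 1 + 1) (d - 1 + 1) = ⊤ :=
    supportedBelow_eq_top (by omega) (by omega)
  have hlie₁ : (lie d (fun _ => eu d ⟨d - 1, by omega⟩) (drift d γ₁ γd V U) x).1
      ⟨d - 1, by omega⟩ ≠ 0 := by
    rw [lie_const_eu_drift hV hU]
    simp [ez, eu]
  calc ⊤ = supportedBelow d (d - 1 + 1) (d - 1 + 1) := htop.symm
    _ ≤ supportedBelow d (d - 1) (d - 1 + 1) ⊔ ℝ ∙ lie d _ _ x :=
        supportedBelow_succ_left_le _ (htop ▸ Submodule.mem_top) hlie₁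
    _ ≤ supportedBelow d (d - 1) (d - 1) ⊔ ℝ ∙ eu d ⟨d - 1, by omega⟩ ⊔ ℝ ∙ lie d _ _ x :=
        sup_le_sup_right (supportedBelow_succ_right_le (by omega)
          (eu_mem_supportedBelow _ (by simp)) (by simp [eu])) _
    _ ≤ M := sup_le (sup_le (supportedBelow_le_of_UU_mem hV hU hU'' h0 hUU _ (by omega))
        ((Submodule.span_singleton_le_iff_mem _ _).2 heu))
        ((Submodule.span_singleton_le_iff_mem _ _).2 hlie)

end brackets

end OscillatorChain

theorem stmt16 (d : ℕ) (hd : 3 ≤ d) (γ₁ γd : ℝ) (V U : ℝ → ℝ)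
    (hV : ContDiff ℝ (⊤ : ℕ∞) V) (hU : ContDiff ℝ (⊤ : ℕ∞) U)
    (hU'' : ∀ s : ℝ, 0 < deriv (deriv U) s) :
    ∀ x : E d,
      Submodule.span ℝ
          ((Set.range fun n : Fin (2 * d - 2) =>
              UU d (drift d γ₁ γd V U) (eu d ⟨0, by omega⟩) n.1 x) ∪
            {eu d ⟨d - 1, by omega⟩,
              lie d (fun _ => eu d ⟨d - 1, by omega⟩) (drift d γ₁ γd V U) x}) = ⊤ ∧
      ∀ i : Fin d,
        ez d i ∈
          Submodule.span ℝ
            ((Set.range fun n : Fin (2 * d - 2) =>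
                UU d (drift d γ₁ γd V U) (eu d ⟨0, by omega⟩) n.1 x) ∪
              {eu d ⟨d - 1, by omega⟩,
                lie d (fun _ => eu d ⟨d - 1, by omega⟩) (drift d γ₁ γd V U) x}) ∧
        eu d i ∈
          Submodule.span ℝ
            ((Set.range fun n : Fin (2 * d - 2) =>
                UU d (drift d γ₁ γd V U) (eu d ⟨0, by omega⟩) n.1 x) ∪
              {eu d ⟨d - 1, by omega⟩,
                lie d (fun _ => eu d ⟨d - 1, by omega⟩) (drift d γ₁ γd V U) x}) := by
  intro x
  refine (and_iff_left_of_imp fun hspan i => ?_).2 (top_unique ?_)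
  · rw [hspan]
    exact ⟨Submodule.mem_top, Submodule.mem_top⟩
  have h2 : ((2 : ℕ∞) : WithTop ℕ∞) ≤ ((⊤ : ℕ∞) : WithTop ℕ∞) := by exact_mod_cast le_top
  exact OscillatorChain.top_le_of_brackets_mem (hV.of_le h2) (hU.of_le h2)
    (fun s => (hU'' s).ne') _ (fun n hn => Submodule.subset_span (Or.inl ⟨⟨n, hn⟩, rfl⟩))
    (Submodule.subset_span (Or.inr (Or.inl rfl))) (Submodule.subset_span (Or.inr (Or.inr rfl)))
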